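/- arXiv:1009.3065 — 3 statements merged into one kernel-verified Lean document; each statement's English description precedes it below -/
import Mathlib

section
/- Suppose the compatibility condition Σ_{a,b∈X} P a b u · Q a b v = δ_{u,v} holds for all u,v ∈ X. Then the comultiplication Δ is multiplicative with respect to the product: Δ(x * y) = Δ(x) * Δ(y) for all x, y ∈ B, where B ⊗ B carries the componentwise product (x₁ ⊗ x₂)*(y₁ ⊗ y₂) = (x₁*y₁) ⊗ (x₂*y₂). -/
open TensorProduct

/-! Both sides are bilinear, so it suffices to compare them on pairs of basis vectors
`e(a,c)`, `e(b,d)`, coefficient by coefficient, after identifying `B ⊗ B` with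
`((X × X) × (X × X)) →₀ k`. The coefficient of `e(u,w) ⊗ e(w',v)` in `Δ(e(a,c) * e(b,d))` is
`δ_{w,w'} P a b u Q c d v`. In `Δ(e(a,c)) * Δ(e(b,d)) = Σ_{s,t} e(a,s) e(b,t) ⊗ e(s,c) e(t,d)`
it is `P a b u Q c d v Σ_{s,t} Q s t w P s t w'`, which the compatibility condition collapses
to the same value. -/

section

variable {R : Type*} [CommSemiring R] {X : Type*} [Fintype X]

theorem mulT_comul_single_single
    (mul : ((X × X) →₀ R) →ₗ[R] ((X × X) →₀ R) →ₗ[R] ((X × X) →₀ R))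
    (Δ : ((X × X) →₀ R) →ₗ[R] ((X × X) →₀ R) ⊗[R] ((X × X) →₀ R))
    (hΔ : ∀ a b : X, Δ (Finsupp.single (a, b) 1) =
      ∑ u : X, Finsupp.single (a, u) (1 : R) ⊗ₜ[R] Finsupp.single (u, b) (1 : R))
    (mulT : (((X × X) →₀ R) ⊗[R] ((X × X) →₀ R)) →ₗ[R]
      (((X × X) →₀ R) ⊗[R] ((X × X) →₀ R)) →ₗ[R] (((X × X) →₀ R) ⊗[R] ((X × X) →₀ R)))
    (hmulT : ∀ x₁ x₂ y₁ y₂ : (X × X) →₀ R,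
      mulT (x₁ ⊗ₜ[R] x₂) (y₁ ⊗ₜ[R] y₂) = (mul x₁ y₁) ⊗ₜ[R] (mul x₂ y₂)) (a b c d : X) :
    mulT (Δ (Finsupp.single (a, c) 1)) (Δ (Finsupp.single (b, d) 1)) =
      ∑ s : X, ∑ t : X, mul (Finsupp.single (a, s) 1) (Finsupp.single (b, t) 1) ⊗ₜ[R]
        mul (Finsupp.single (s, c) 1) (Finsupp.single (t, d) 1) := by
  simp only [hΔ, map_sum, LinearMap.sum_apply, hmulT]
  exact Finset.sum_comm

variable [DecidableEq X]

theorem sum_sum_smul_single_one_apply (f : X → X → R) (p : X × X) :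
    (∑ u : X, ∑ v : X, f u v • Finsupp.single (u, v) (1 : R)) p = f p.1 p.2 := by
  simp [Finsupp.finsetSum_apply, Finsupp.single_apply, Prod.ext_iff, ite_and]

theorem finsuppTensorFinsupp'_comul_apply
    (Δ : ((X × X) →₀ R) →ₗ[R] ((X × X) →₀ R) ⊗[R] ((X × X) →₀ R))
    (hΔ : ∀ a b : X, Δ (Finsupp.single (a, b) 1) =
      ∑ u : X, Finsupp.single (a, u) (1 : R) ⊗ₜ[R] Finsupp.single (u, b) (1 : R))
    (z : (X × X) →₀ R) (u w w' v : X) :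
    finsuppTensorFinsupp' R _ _ (Δ z) ((u, w), (w', v)) = if w = w' then z (u, v) else 0 := by
  induction z using Finsupp.induction_linear with
  | zero => simp
  | add f g hf hg => simp only [map_add, Finsupp.add_apply, hf, hg]; split_ifs <;> simp
  | single p r =>
    obtain ⟨a, b⟩ := p
    rw [← Finsupp.smul_single_one, map_smul, hΔ, map_smul, Finsupp.smul_apply]
    simp only [map_sum, Finsupp.finsetSum_apply, finsuppTensorFinsupp'_apply_apply]
    rcases eq_or_ne w w' with rfl | hne
    · by_cases ha : a = u <;> by_cases hb : b = v <;> simp [Finsupp.single_apply, ha, hb]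
    · simp [Finsupp.single_apply, ite_and, hne, hne.symm]

theorem sum_sum_mul_mul_eq_ite (P Q : X → X → X → R)
    (hcompat : ∀ u v : X, ∑ a : X, ∑ b : X, P a b u * Q a b v = if u = v then (1 : R) else 0)
    (α β : R) (w w' : X) :
    ∑ s : X, ∑ t : X, α * Q s t w * (P s t w' * β) = if w = w' then α * β else 0 := by
  calc ∑ s : X, ∑ t : X, α * Q s t w * (P s t w' * β)
      = α * β * ∑ s : X, ∑ t : X, P s t w' * Q s t w := by
        simp only [Finset.mul_sum]
        exact Finset.sum_congr rfl fun _ _ => Finset.sum_congr rfl fun _ _ => by ring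
    _ = if w = w' then α * β else 0 := by
        rw [hcompat, mul_ite, mul_one, mul_zero]
        exact if_congr eq_comm rfl rfl

end

/-- Under the compatibility condition
Σ_{a,b} P a b u · Q a b v = δ_{u,v}, the comultiplication Δ is multiplicative
for the product on B and the componentwise product on B ⊗ B.
(Multiplicativity half of Proposition 1.1.) -/
theorem hall_fusion_comul_multiplicative (k : Type*) [Field k]
    (X : Type*) [Fintype X] [DecidableEq X] (P Q : X → X → X → k)
    (mul : ((X × X) →₀ k) →ₗ[k] ((X × X) →₀ k) →ₗ[k] ((X × X) →₀ k))
    (hmul : ∀ a b c d : X,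
      mul (Finsupp.single (a, c) 1) (Finsupp.single (b, d) 1) =
        ∑ u : X, ∑ v : X, (P a b u * Q c d v) • Finsupp.single (u, v) (1 : k))
    (Δ : ((X × X) →₀ k) →ₗ[k] ((X × X) →₀ k) ⊗[k] ((X × X) →₀ k))
    (hΔ : ∀ a b : X, Δ (Finsupp.single (a, b) 1) =
      ∑ u : X, Finsupp.single (a, u) (1 : k) ⊗ₜ[k] Finsupp.single (u, b) (1 : k))
    (mulT : (((X × X) →₀ k) ⊗[k] ((X × X) →₀ k)) →ₗ[k]
      (((X × X) →₀ k) ⊗[k] ((X × X) →₀ k)) →ₗ[k] (((X × X) →₀ k) ⊗[k] ((X × X) →₀ k)))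
    (hmulT : ∀ x₁ x₂ y₁ y₂ : (X × X) →₀ k,
      mulT (x₁ ⊗ₜ[k] x₂) (y₁ ⊗ₜ[k] y₂) = (mul x₁ y₁) ⊗ₜ[k] (mul x₂ y₂))
    (hcompat : ∀ u v : X,
      ∑ a : X, ∑ b : X, P a b u * Q a b v = if u = v then (1 : k) else 0) :
    ∀ x y : (X × X) →₀ k, Δ (mul x y) = mulT (Δ x) (Δ y) := by
  have hmul_apply : ∀ a b c d u v : X,
      mul (Finsupp.single (a, c) 1) (Finsupp.single (b, d) 1) (u, v) = P a b u * Q c d v :=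
    fun a b c d u v => by rw [hmul, sum_sum_smul_single_one_apply]
  have hbilin : mul.compr₂ Δ = mulT.compl₁₂ Δ Δ := by
    refine LinearMap.ext_basis Finsupp.basisSingleOne Finsupp.basisSingleOne
      fun ⟨a, c⟩ ⟨b, d⟩ => (finsuppTensorFinsupp' k _ _).injective ?_
    ext ⟨⟨u, w⟩, w', v⟩
    simp only [LinearMap.compr₂_apply, LinearMap.compl₁₂_apply, Finsupp.coe_basisSingleOne,
      finsuppTensorFinsupp'_comul_apply Δ hΔ, mulT_comul_single_single mul Δ hΔ mulT hmulT,
      map_sum, Finsupp.finsetSum_apply, finsuppTensorFinsupp'_apply_apply, hmul_apply]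
    exact (sum_sum_mul_mul_eq_ite P Q hcompat _ _ w w').symm
  intro x y
  exact LinearMap.congr_fun₂ hbilin x y
end

section
/- Suppose Σ_{u∈X} P a b u · Q c d u = δ_{a,c} · δ_{b,d} for all a,b,c,d ∈ X. Then the counit ε is multiplicative with respect to the product: ε(x * y) = ε(x) · ε(y) for all x, y ∈ B. -/
open Finsupp

theorem map_mul_eq_mul_of_single_one {R α : Type*} [CommSemiring R]
    (mul : (α →₀ R) →ₗ[R] (α →₀ R) →ₗ[R] (α →₀ R)) (ε : (α →₀ R) →ₗ[R] R)
    (hsingle : ∀ p q : α,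
      ε (mul (single p 1) (single q 1)) = ε (single p 1) * ε (single q 1)) :
    ∀ x y : α →₀ R, ε (mul x y) = ε x * ε y := by
  have h : mul.compr₂ ε = (LinearMap.mul R R).compl₁₂ ε ε := by
    ext p q
    simpa using hsingle p q
  exact fun x y => LinearMap.congr_fun₂ h x y

theorem counit_sum_smul_single {k X : Type*} [CommSemiring k] [Fintype X] [DecidableEq X]
    (ε : ((X × X) →₀ k) →ₗ[k] k)
    (hε : ∀ a b : X, ε (single (a, b) 1) = if a = b then (1 : k) else 0) (f : X → X → k) :
    ε (∑ u, ∑ v, f u v • single (u, v) (1 : k)) = ∑ u, f u u := by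
  simp only [map_sum, map_smul, hε, smul_eq_mul, mul_ite, mul_one, mul_zero, Finset.sum_ite_eq,
    Finset.mem_univ, if_true]

/-- If Σ_u P a b u · Q c d u = δ_{a,c} · δ_{b,d}, then the counit
ε(e(a,b)) = δ_{a,b} is multiplicative for the product on B. -/
theorem hall_fusion_counit_multiplicative (k : Type*) [Field k]
    (X : Type*) [Fintype X] [DecidableEq X] (P Q : X → X → X → k)
    (mul : ((X × X) →₀ k) →ₗ[k] ((X × X) →₀ k) →ₗ[k] ((X × X) →₀ k))
    (hmul : ∀ a b c d : X,
      mul (Finsupp.single (a, c) 1) (Finsupp.single (b, d) 1) =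
        ∑ u : X, ∑ v : X, (P a b u * Q c d v) • Finsupp.single (u, v) (1 : k))
    (ε : ((X × X) →₀ k) →ₗ[k] k)
    (hε : ∀ a b : X, ε (Finsupp.single (a, b) 1) = if a = b then (1 : k) else 0)
    (hcompat : ∀ a b c d : X,
      ∑ u : X, P a b u * Q c d u =
        (if a = c then (1 : k) else 0) * (if b = d then (1 : k) else 0)) :
    ∀ x y : (X × X) →₀ k, ε (mul x y) = ε x * ε y := by
  refine map_mul_eq_mul_of_single_one mul ε ?_
  rintro ⟨a, c⟩ ⟨b, d⟩
  rw [hmul, counit_sum_smul_single ε hε, hcompat, hε, hε]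
end

section
/- Suppose: (i) Q is associative, i.e. Σ_{u∈X} Q a b u · Q u c w = Σ_{v∈X} Q b c v · Q a v w for all a,b,c,w ∈ X; (ii) S : X → X satisfies S ∘ S = id and P a b u = Q (S b) (S a) (S u) for all a,b,u ∈ X; (iii) defining Q₃(a,b,c;d) = Σ_{u∈X} Q a b u · Q u c d, one has Σ_{a∈X} Q₃(S a, a, b; c) = δ_{b,c} and Σ_{a∈X} Q₃(a, S a, b; c) = δ_{b,c} for all b,c ∈ X. Then the 'von Neumann' identity μ₃ ∘ (id ⊗ 𝒮 ⊗ id) ∘ Δ₃ = id holds on B; equivalently, for all a,b ∈ X: Σ_{u,v∈X} e(a,u) * e(S v, S u) * e(v,b) = e(a,b). -/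
/-!
Expanding the triple product in the basis, its `(w, z)` coefficient is a product of a `P`-factor
depending only on `(a, v, w)` and a `Q`-factor depending only on `(b, u, z)`, so the double sum
over `u, v` splits into a product of two sums. The `Q`-sum is the right coend condition itself.
Rewriting `P` through `Q` and reindexing by the involution `S`, the `P`-sum becomes
`∑ v p, Q v (S a) p * Q (S v) p (S w)`, which associativity turns into
`∑ v, Q₃(S v, v, S a; S w)`, the left coend condition at `(S a, S w)`.
-/
section StructureConstants

variable {k X : Type*} [CommSemiring k] [Fintype X] [DecidableEq X] {P Q : X → X → X → k}
  {mul : ((X × X) →₀ k) →ₗ[k] ((X × X) →₀ k) →ₗ[k] ((X × X) →₀ k)}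

theorem apply_mul_single_single
    (hmul : ∀ a b c d : X,
      mul (Finsupp.single (a, c) 1) (Finsupp.single (b, d) 1) =
        ∑ u : X, ∑ v : X, (P a b u * Q c d v) • Finsupp.single (u, v) (1 : k))
    (a b c d w z : X) :
    mul (Finsupp.single (a, c) 1) (Finsupp.single (b, d) 1) (w, z) = P a b w * Q c d z := by
  simp [hmul, Finsupp.finsetSum_apply, Finsupp.single_apply, Prod.ext_iff, ite_and]

theorem apply_mul_mul_single_single_single
    (hmul : ∀ a b c d : X,
      mul (Finsupp.single (a, c) 1) (Finsupp.single (b, d) 1) =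
        ∑ u : X, ∑ v : X, (P a b u * Q c d v) • Finsupp.single (u, v) (1 : k))
    (a b c d e f w z : X) :
    mul (mul (Finsupp.single (a, c) 1) (Finsupp.single (b, d) 1)) (Finsupp.single (e, f) 1) (w, z)
      = (∑ p, P a b p * P p e w) * (∑ q, Q c d q * Q q f z) := by
  have expand : ∀ x : (X × X) →₀ k, x = ∑ pq : X × X, x pq • Finsupp.single pq 1 := fun x => by
    simp_rw [Finsupp.smul_single_one]; exact (Finsupp.univ_sum_single x).symm
  rw [expand (mul (Finsupp.single (a, c) 1) _)]
  simp only [map_sum, map_smul, LinearMap.sum_apply, LinearMap.smul_apply, Finsupp.finsetSum_apply,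
    Finsupp.smul_apply, smul_eq_mul, apply_mul_single_single hmul, Fintype.sum_prod_type,
    Finset.sum_mul_sum]
  exact Fintype.sum_congr _ _ fun p => Fintype.sum_congr _ _ fun q => mul_mul_mul_comm ..

theorem sum_P_mul_P_antipode_eq_ite
    (hQassoc : ∀ a b c w : X,
      ∑ u : X, Q a b u * Q u c w = ∑ v : X, Q b c v * Q a v w)
    {S : X → X} (hS : Function.Involutive S)
    (hPQ : ∀ a b u : X, P a b u = Q (S b) (S a) (S u))
    (hQ3l : ∀ b c : X,
      ∑ a : X, (∑ u : X, Q (S a) a u * Q u b c) = if b = c then (1 : k) else 0)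
    (a w : X) :
    ∑ v, ∑ p, P a (S v) p * P p v w = if a = w then 1 else 0 := by
  have reindex : ∀ v, ∑ p, P a (S v) p * P p v w = ∑ p, Q v (S a) p * Q (S v) p (S w) := fun v =>
    Fintype.sum_bijective S hS.bijective _ _ fun p => by rw [hPQ, hPQ, hS]
  simp only [reindex, ← hQassoc, hQ3l, hS.injective.eq_iff]

end StructureConstants

/-- Under associativity of Q, the antipode compatibility
P a b u = Q (S b) (S a) (S u) for an involution S, and the conditions
Σ_a Q₃(S a, a, b; c) = δ_{b,c} and Σ_a Q₃(a, S a, b; c) = δ_{b,c} where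
Q₃(a,b,c;d) = Σ_u Q a b u · Q u c d, the "von Neumann" identity
μ₃ ∘ (id ⊗ 𝒮 ⊗ id) ∘ Δ₃ = id holds on B; equivalently, for all a,b:
Σ_{u,v} e(a,u) * e(S v, S u) * e(v,b) = e(a,b). -/
theorem hall_fusion_von_neumann (k : Type*) [Field k]
    (X : Type*) [Fintype X] [DecidableEq X] (P Q : X → X → X → k)
    (mul : ((X × X) →₀ k) →ₗ[k] ((X × X) →₀ k) →ₗ[k] ((X × X) →₀ k))
    (hmul : ∀ a b c d : X,
      mul (Finsupp.single (a, c) 1) (Finsupp.single (b, d) 1) =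
        ∑ u : X, ∑ v : X, (P a b u * Q c d v) • Finsupp.single (u, v) (1 : k))
    (hQassoc : ∀ a b c w : X,
      ∑ u : X, Q a b u * Q u c w = ∑ v : X, Q b c v * Q a v w)
    (S : X → X) (hS : S ∘ S = id)
    (hPQ : ∀ a b u : X, P a b u = Q (S b) (S a) (S u))
    (hQ3l : ∀ b c : X,
      ∑ a : X, (∑ u : X, Q (S a) a u * Q u b c) = if b = c then (1 : k) else 0)
    (hQ3r : ∀ b c : X,
      ∑ a : X, (∑ u : X, Q a (S a) u * Q u b c) = if b = c then (1 : k) else 0) :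
    ∀ a b : X,
      ∑ u : X, ∑ v : X,
          mul (mul (Finsupp.single (a, u) 1) (Finsupp.single (S v, S u) 1))
            (Finsupp.single (v, b) 1)
        = Finsupp.single (a, b) (1 : k) := by
  intro a b
  ext ⟨w, z⟩
  have hSinv : Function.Involutive S := congrFun hS
  simp only [Finsupp.finsetSum_apply, apply_mul_mul_single_single_single hmul]
  rw [Finset.sum_comm, ← Finset.sum_mul_sum,
    sum_P_mul_P_antipode_eq_ite hQassoc hSinv hPQ hQ3l, hQ3r, ite_zero_mul_ite_zero, mul_one,
    Finsupp.single_apply]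
  simp only [Prod.mk.injEq]
end
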